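/- Fix real parameters α ≥ 0 and β > 0 and set a = 0. Let l, u, π, Θ : ℝ × ℝ → ℝ be smooth. Then z = (l, u, π, Θ) satisfies the 4-component multisymplectic system M z_t + K(z) z_x = ∇H(z) — where M is the antisymmetric 4×4 matrix with M₁₃ = 1, M₃₁ = −1 and all other entries zero, K(z) is the antisymmetric 4×4 matrix with upper-triangular nonzero entries K₁₂ = π, K₁₃ = u, K₂₄ = β (and K_{ji} = −K_{ij}, all other entries zero), and H(z) = (α/2)u² − (β/2)Θ² — if and only if Θ = u_x and the functions l, u, π satisfy: (i) αu − β u_xx = −π l_x; (ii) l_t + u l_x = 0; (iii) π_t + ∂_x(π u) = 0. -/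

import Mathlib

/-- Partial derivative in the first (spatial) variable. -/
noncomputable def px (f : ℝ → ℝ → ℝ) : ℝ → ℝ → ℝ := fun x t => deriv (fun y => f y t) x

/-- Partial derivative in the second (time) variable. -/
noncomputable def pt (f : ℝ → ℝ → ℝ) : ℝ → ℝ → ℝ := fun x t => deriv (fun s => f x s) t

/-- The Euclidean gradient of `H : ℝⁿ → ℝ` (vector of partial derivatives). -/
noncomputable def gradH {n : ℕ} (H : (Fin n → ℝ) → ℝ) (w : Fin n → ℝ) : Fin n → ℝ :=
  fun i => deriv (fun s => H (Function.update w i s)) (w i)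

/-- The constant antisymmetric `4×4` matrix `M` with `M₁₃ = 1`, `M₃₁ = −1`. -/
def Mmat4 : Matrix (Fin 4) (Fin 4) ℝ :=
  !![0, 0, 1, 0;
     0, 0, 0, 0;
     -1, 0, 0, 0;
     0, 0, 0, 0]

/-- The antisymmetric matrix `K(z)` for the `a = 0`, `β > 0` case, with
`z = (l, u, π, Θ)` given as `w 0, …, w 3`. -/
def Kmat4 (β : ℝ) (w : Fin 4 → ℝ) : Matrix (Fin 4) (Fin 4) ℝ :=
  !![0, w 2, w 1, 0;
     -(w 2), 0, 0, β;
     -(w 1), 0, 0, 0;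
     0, -β, 0, 0]

/-- The Hamiltonian `H(z) = (α/2)u² − (β/2)Θ²`. -/
noncomputable def Ham4 (α β : ℝ) (w : Fin 4 → ℝ) : ℝ :=
  α / 2 * (w 1) ^ 2 - β / 2 * (w 3) ^ 2

lemma gradHam4 (α β : ℝ) (w : Fin 4 → ℝ) :
    gradH (Ham4 α β) w = ![0, α * w 1, 0, -(β * w 3)] := by
  have h0 : gradH (Ham4 α β) w 0 = 0 := by
    have : (fun s => Ham4 α β (Function.update w 0 s)) =
        fun _ => α / 2 * (w 1) ^ 2 - β / 2 * (w 3) ^ 2 := by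
      funext s
      simp [Ham4, Function.update_of_ne (show (1:Fin 4) ≠ 0 by decide),
        Function.update_of_ne (show (3:Fin 4) ≠ 0 by decide)]
    unfold gradH; rw [this]; simp
  have h2 : gradH (Ham4 α β) w 2 = 0 := by
    have : (fun s => Ham4 α β (Function.update w 2 s)) =
        fun _ => α / 2 * (w 1) ^ 2 - β / 2 * (w 3) ^ 2 := by
      funext s
      simp [Ham4, Function.update_of_ne (show (1:Fin 4) ≠ 2 by decide),
        Function.update_of_ne (show (3:Fin 4) ≠ 2 by decide)]
    unfold gradH; rw [this]; simp
  have h1 : gradH (Ham4 α β) w 1 = α * w 1 := by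
    have : (fun s => Ham4 α β (Function.update w 1 s)) =
        fun s => α / 2 * s ^ 2 - β / 2 * (w 3) ^ 2 := by
      funext s
      simp [Ham4, Function.update_of_ne (show (3:Fin 4) ≠ 1 by decide)]
    unfold gradH; rw [this]
    rw [deriv_fun_sub (by fun_prop) (by fun_prop), deriv_const_mul _ (by fun_prop)]
    simp; ring
  have h3 : gradH (Ham4 α β) w 3 = -(β * w 3) := by
    have : (fun s => Ham4 α β (Function.update w 3 s)) =
        fun s => α / 2 * (w 1) ^ 2 - β / 2 * s ^ 2 := by
      funext s
      simp [Ham4, Function.update_of_ne (show (1:Fin 4) ≠ 3 by decide)]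
    unfold gradH; rw [this]
    rw [deriv_fun_sub (by fun_prop) (by fun_prop), deriv_const_mul _ (by fun_prop)]
    simp; ring
  funext i
  fin_cases i
  · exact h0
  · exact h1
  · exact h2
  · exact h3

lemma lhs4 (β : ℝ) (l u pr Θ : ℝ → ℝ → ℝ) (x t : ℝ) :
    (Mmat4.mulVec (fun i => pt (fun x t => ![l x t, u x t, pr x t, Θ x t] i) x t)
        + (Kmat4 β ![l x t, u x t, pr x t, Θ x t]).mulVec
            (fun i => px (fun x t => ![l x t, u x t, pr x t, Θ x t] i) x t))
      = ![pt pr x t + (pr x t * px u x t + u x t * px pr x t),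
          -(pr x t) * px l x t + β * px Θ x t,
          -(pt l x t) - u x t * px l x t,
          -(β * px u x t)] := by
  funext i
  fin_cases i <;>
    simp [Mmat4, Kmat4, Matrix.mulVec, dotProduct, Fin.sum_univ_four] <;>
    ring

lemma diffx4 (f : ℝ → ℝ → ℝ) (hf : ContDiff ℝ (⊤ : ℕ∞) (fun p : ℝ × ℝ => f p.1 p.2)) (x t : ℝ) :
    DifferentiableAt ℝ (fun y => f y t) x :=
  by have := ((hf.differentiable (by simp)) (x, t)).comp x
      (differentiableAt_id.prodMk (differentiableAt_const t) :
        DifferentiableAt ℝ (fun y : ℝ => (id y, t)) x); exact this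

/-- For `a = 0`, `β > 0`: `z = (l, u, π, Θ)` satisfies the 4-component multisymplectic system
`M z_t + K(z) z_x = ∇H(z)` iff `Θ = u_x` and `(l, u, π)` satisfies the Clebsch system
(i) `αu − βu_xx = −π l_x`, (ii) `l_t + u l_x = 0`, (iii) `π_t + ∂_x(πu) = 0`. -/
theorem stmt11 (α β : ℝ) (hα : 0 ≤ α) (hβ : 0 < β)
    (l u pr Θ : ℝ → ℝ → ℝ)
    (hl : ContDiff ℝ (⊤ : ℕ∞) (fun p : ℝ × ℝ => l p.1 p.2))
    (hu : ContDiff ℝ (⊤ : ℕ∞) (fun p : ℝ × ℝ => u p.1 p.2))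
    (hpr : ContDiff ℝ (⊤ : ℕ∞) (fun p : ℝ × ℝ => pr p.1 p.2))
    (hΘ : ContDiff ℝ (⊤ : ℕ∞) (fun p : ℝ × ℝ => Θ p.1 p.2)) :
    (∀ x t : ℝ,
      Mmat4.mulVec (fun i => pt (fun x t => ![l x t, u x t, pr x t, Θ x t] i) x t)
        + (Kmat4 β ![l x t, u x t, pr x t, Θ x t]).mulVec
            (fun i => px (fun x t => ![l x t, u x t, pr x t, Θ x t] i) x t)
      = gradH (Ham4 α β) ![l x t, u x t, pr x t, Θ x t])
    ↔ ((∀ x t : ℝ, Θ x t = px u x t)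
      ∧ (∀ x t : ℝ, α * u x t - β * px (px u) x t = -(pr x t) * px l x t)
      ∧ (∀ x t : ℝ, pt l x t + u x t * px l x t = 0)
      ∧ (∀ x t : ℝ, pt pr x t + px (fun x t => pr x t * u x t) x t = 0)) := by
  have hprod : ∀ x t : ℝ, px (fun x t => pr x t * u x t) x t
      = px pr x t * u x t + pr x t * px u x t := by
    intro x t
    show deriv (fun y => pr y t * u y t) x = _
    exact deriv_mul (diffx4 pr hpr x t) (diffx4 u hu x t)
  constructor
  · intro h
    have hc : ∀ x t : ℝ,
        (![pt pr x t + (pr x t * px u x t + u x t * px pr x t),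
          -(pr x t) * px l x t + β * px Θ x t,
          -(pt l x t) - u x t * px l x t,
          -(β * px u x t)] : Fin 4 → ℝ)
        = ![0, α * u x t, 0, -(β * Θ x t)] := by
      intro x t
      rw [← lhs4 β l u pr Θ x t]
      have := h x t
      rw [gradHam4] at this
      simpa using this
    have hΘeq : ∀ x t : ℝ, Θ x t = px u x t := by
      intro x t
      have e3 : -(β * px u x t) = -(β * Θ x t) := by
        simpa using congrFun (hc x t) 3
      have := neg_injective e3
      exact (mul_left_cancel₀ hβ.ne' this).symm
    have hΘfun : Θ = px u := funext fun x => funext fun t => hΘeq x t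
    refine ⟨hΘeq, ?_, ?_, ?_⟩
    · intro x t
      have e1 : -(pr x t) * px l x t + β * px Θ x t = α * u x t := by
        simpa using congrFun (hc x t) 1
      rw [hΘfun] at e1
      linarith
    · intro x t
      have e2 : -(pt l x t) - u x t * px l x t = 0 := by
        simpa using congrFun (hc x t) 2
      linarith
    · intro x t
      have e0 : pt pr x t + (pr x t * px u x t + u x t * px pr x t) = 0 := by
        simpa using congrFun (hc x t) 0
      rw [hprod x t]
      linarith
  · rintro ⟨hΘeq, hi, hii, hiii⟩ x t
    have hΘfun : Θ = px u := funext fun x => funext fun t => hΘeq x t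
    rw [lhs4, gradHam4]
    funext i
    fin_cases i <;> simp
    · have := hiii x t
      rw [hprod x t] at this
      linarith
    · rw [hΘfun]
      have := hi x t
      linarith
    · have := hii x t
      linarith
    · exact Or.inl (hΘeq x t).symm
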